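/- Let E be the Banach algebra of continuous ℂ-linear endomorphisms of the space of n×n complex matrices, let A ∈ E, and suppose exp(t A) converges to some Λ ∈ E as t → +∞ (t real). Then the function t ↦ exp(t A) − Λ is Bochner integrable on [0, ∞), and A∘(∫_0^∞ (exp(t A) − Λ) dt) = Λ − 1. -/

import Mathlib

/-!
Passing to the limit `t → ∞` in `exp ((s + t) • A) = exp (s • A) * exp (t • A)` shows that `Λ`
absorbs every `exp (s • A)` from either side, so `Λ` is idempotent and `g t = exp (t • A) - Λ`
satisfies `g (s + t) = g s * g t` and `g t → 0`. A semigroup tending to zero decays exponentially: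
once `‖g T‖ ≤ 1/2`, we get `‖g (r + k T)‖ ≤ 2⁻ᵏ sup_{[0, T]} ‖g‖`. Differentiating `exp (s • A) * Λ = Λ`
at `s = 0` gives `A * Λ = 0`, hence `g' = A * g`, and the fundamental theorem of calculus on
`[0, ∞)` yields `A * ∫ g = g ∞ - g 0 = Λ - 1`.
-/

open Filter MeasureTheory NormedSpace Set Topology

section Semigroup

variable {𝔸 : Type*} [NormedRing 𝔸]

theorem norm_apply_add_nat_mul_le {g : ℝ → 𝔸} (hg : ∀ s t, g (s + t) = g s * g t)
    (t T : ℝ) (k : ℕ) : ‖g (t + k * T)‖ ≤ ‖g t‖ * ‖g T‖ ^ k := by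
  induction k with
  | zero => simp
  | succ k ih =>
    calc ‖g (t + (k + 1 : ℕ) * T)‖ = ‖g (t + k * T) * g T‖ := by
          rw [← hg]; push_cast; ring_nf
      _ ≤ ‖g (t + k * T)‖ * ‖g T‖ := norm_mul_le _ _
      _ ≤ ‖g t‖ * ‖g T‖ ^ k * ‖g T‖ := by gcongr
      _ = ‖g t‖ * ‖g T‖ ^ (k + 1) := by ring

theorem half_pow_floor_div_le_two_mul_exp (T t : ℝ) :
    (1 / 2 : ℝ) ^ ⌊t / T⌋₊ ≤ 2 * Real.exp (-(Real.log 2 / T) * t) := by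
  have hk : t / T - 1 < ⌊t / T⌋₊ := by linarith [Nat.lt_floor_add_one (t / T)]
  have hlog : 0 < Real.log 2 := Real.log_pos one_lt_two
  calc (1 / 2 : ℝ) ^ ⌊t / T⌋₊ = Real.exp (⌊t / T⌋₊ * -Real.log 2) := by
        rw [Real.exp_nat_mul, Real.exp_neg, Real.exp_log two_pos, one_div]
    _ ≤ Real.exp (Real.log 2 + -(Real.log 2 / T) * t) := by
        gcongr
        rw [neg_mul, div_mul_eq_mul_div, mul_div_assoc]
        nlinarith
    _ = 2 * Real.exp (-(Real.log 2 / T) * t) := by rw [Real.exp_add, Real.exp_log two_pos]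

theorem exists_norm_le_mul_exp_neg_of_tendsto_zero {g : ℝ → 𝔸} (hcont : Continuous g)
    (hg : ∀ s t, g (s + t) = g s * g t) (h0 : Tendsto g atTop (𝓝 0)) :
    ∃ C c : ℝ, 0 < c ∧ ∀ t, 0 ≤ t → ‖g t‖ ≤ C * Real.exp (-c * t) := by
  obtain ⟨T, hgT, hT⟩ : ∃ T, ‖g T‖ ≤ 1 / 2 ∧ 0 < T :=
    ((h0.norm.eventually (ge_mem_nhds (by norm_num))).and (eventually_gt_atTop 0)).exists
  obtain ⟨C, hC⟩ := isCompact_Icc.exists_bound_of_continuousOn (hcont.continuousOn (s := Icc 0 T))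
  have hC0 : 0 ≤ C := (norm_nonneg _).trans (hC 0 ⟨le_rfl, hT.le⟩)
  refine ⟨2 * C, Real.log 2 / T, div_pos (Real.log_pos one_lt_two) hT, fun t ht => ?_⟩
  set k := ⌊t / T⌋₊
  have hr : t - k * T ∈ Icc 0 T := by
    have hk₁ : (k : ℝ) * T ≤ t := (le_div_iff₀ hT).mp (Nat.floor_le (div_nonneg ht hT.le))
    have hk₂ : t < (k + 1) * T := (div_lt_iff₀ hT).mp (Nat.lt_floor_add_one _)
    constructor <;> linarith
  calc ‖g t‖ = ‖g (t - k * T + k * T)‖ := by rw [sub_add_cancel]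
    _ ≤ ‖g (t - k * T)‖ * ‖g T‖ ^ k := norm_apply_add_nat_mul_le hg _ _ _
    _ ≤ C * (1 / 2) ^ k := by gcongr; exact hC _ hr
    _ ≤ C * (2 * Real.exp (-(Real.log 2 / T) * t)) := by
        gcongr; exact half_pow_floor_div_le_two_mul_exp T t
    _ = 2 * C * Real.exp (-(Real.log 2 / T) * t) := by ring

theorem integrableOn_Ici_of_tendsto_zero {g : ℝ → 𝔸} (hcont : Continuous g)
    (hg : ∀ s t, g (s + t) = g s * g t) (h0 : Tendsto g atTop (𝓝 0)) :
    IntegrableOn g (Ici 0) := by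
  obtain ⟨C, c, hc, hbound⟩ := exists_norm_le_mul_exp_neg_of_tendsto_zero hcont hg h0
  have hdom : IntegrableOn (fun t => C * Real.exp (-c * t)) (Ici 0) :=
    (integrableOn_Ici_iff_integrableOn_Ioi).mpr ((exp_neg_integrableOn_Ioi 0 hc).const_mul C)
  exact hdom.mono' hcont.aestronglyMeasurable.restrict
    ((ae_restrict_mem measurableSet_Ici).mono hbound)

end Semigroup

section LimitOfExp

variable {𝔸 : Type*} [NormedRing 𝔸] [NormedAlgebra ℝ 𝔸] [CompleteSpace 𝔸] {A Λ : 𝔸}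

theorem exp_add_smul (A : 𝔸) (s t : ℝ) : exp ((s + t) • A) = exp (s • A) * exp (t • A) := by
  let +nondep : NormedAlgebra ℚ 𝔸 := .restrictScalars ℚ ℝ 𝔸
  rw [add_smul]
  exact exp_add_of_commute (((Commute.refl A).smul_left s).smul_right t)

theorem exp_smul_mul_of_tendsto (hΛ : Tendsto (fun t : ℝ => exp (t • A)) atTop (𝓝 Λ))
    (s : ℝ) : exp (s • A) * Λ = Λ :=
  tendsto_nhds_unique (hΛ.const_mul _) <| by
    simpa only [Function.comp_def, id, exp_add_smul] using
      hΛ.comp (tendsto_atTop_add_const_left atTop s tendsto_id)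

theorem mul_exp_smul_of_tendsto (hΛ : Tendsto (fun t : ℝ => exp (t • A)) atTop (𝓝 Λ))
    (s : ℝ) : Λ * exp (s • A) = Λ :=
  tendsto_nhds_unique (hΛ.mul_const _) <| by
    simpa only [Function.comp_def, id, exp_add_smul] using
      hΛ.comp (tendsto_atTop_add_const_right atTop s tendsto_id)

theorem mul_self_of_tendsto_exp_smul (hΛ : Tendsto (fun t : ℝ => exp (t • A)) atTop (𝓝 Λ)) :
    Λ * Λ = Λ :=
  tendsto_nhds_unique (hΛ.mul_const Λ) <| by
    simpa only [exp_smul_mul_of_tendsto hΛ] using tendsto_const_nhds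

theorem mul_eq_zero_of_tendsto_exp_smul (hΛ : Tendsto (fun t : ℝ => exp (t • A)) atTop (𝓝 Λ)) :
    A * Λ = 0 := by
  have h := (hasDerivAt_exp_smul_const' A (0 : ℝ)).mul_const Λ
  simp only [exp_smul_mul_of_tendsto hΛ, zero_smul, exp_zero, mul_one] at h
  exact h.unique (hasDerivAt_const 0 Λ)

theorem exp_add_smul_sub_of_tendsto (hΛ : Tendsto (fun t : ℝ => exp (t • A)) atTop (𝓝 Λ))
    (s t : ℝ) : exp ((s + t) • A) - Λ = (exp (s • A) - Λ) * (exp (t • A) - Λ) := by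
  rw [sub_mul, mul_sub, mul_sub, exp_smul_mul_of_tendsto hΛ, mul_exp_smul_of_tendsto hΛ,
    mul_self_of_tendsto_exp_smul hΛ, exp_add_smul]
  abel

theorem hasDerivAt_exp_smul_sub_of_tendsto
    (hΛ : Tendsto (fun t : ℝ => exp (t • A)) atTop (𝓝 Λ)) (t : ℝ) :
    HasDerivAt (fun u : ℝ => exp (u • A) - Λ) (A * (exp (t • A) - Λ)) t := by
  rw [mul_sub, mul_eq_zero_of_tendsto_exp_smul hΛ, sub_zero]
  exact (hasDerivAt_exp_smul_const' A t).sub_const Λ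

theorem integrableOn_exp_smul_sub_of_tendsto
    (hΛ : Tendsto (fun t : ℝ => exp (t • A)) atTop (𝓝 Λ)) :
    IntegrableOn (fun t : ℝ => exp (t • A) - Λ) (Ici 0) :=
  integrableOn_Ici_of_tendsto_zero
    ((differentiable_exp_smul_const ℝ A).continuous.sub continuous_const)
    (exp_add_smul_sub_of_tendsto hΛ) (by simpa only [sub_self] using hΛ.sub_const Λ)

theorem mul_integral_exp_smul_sub_of_tendsto
    (hΛ : Tendsto (fun t : ℝ => exp (t • A)) atTop (𝓝 Λ)) :
    A * ∫ t in Ici (0 : ℝ), (exp (t • A) - Λ) = Λ - 1 := by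
  have hint := integrableOn_exp_smul_sub_of_tendsto hΛ
  rw [← integral_const_mul_of_integrable hint, integral_Ici_eq_integral_Ioi,
    integral_Ioi_of_hasDerivAt_of_tendsto' (fun t _ => hasDerivAt_exp_smul_sub_of_tendsto hΛ t)
      (IntegrableOn.mono_set (hint.const_mul A) Ioi_subset_Ici_self)
      (by simpa only [sub_self] using hΛ.sub_const Λ)]
  simp

end LimitOfExp

attribute [local instance] Matrix.linftyOpNormedAddCommGroup Matrix.linftyOpNormedSpace

/-- if `e^{t A} → Λ` as `t → +∞` then `t ↦ e^{t A} - Λ` is Bochner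
integrable on `[0, ∞)` and `A ∘ ∫_0^∞ (e^{t A} - Λ) dt = Λ - 1`. -/
theorem stmt12 (n : ℕ)
    (A Λ : @ContinuousLinearMap ℂ ℂ _ _ (RingHom.id ℂ) (Matrix (Fin n) (Fin n) ℂ)
      (@UniformSpace.toTopologicalSpace _ (@PseudoMetricSpace.toUniformSpace _ SeminormedAddCommGroup.toPseudoMetricSpace)) _
      (Matrix (Fin n) (Fin n) ℂ)
      (@UniformSpace.toTopologicalSpace _ (@PseudoMetricSpace.toUniformSpace _ SeminormedAddCommGroup.toPseudoMetricSpace)) _ _ _)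
    (hΛ : Tendsto (fun t : ℝ => NormedSpace.exp (t • A)) atTop (nhds Λ)) :
    IntegrableOn (fun t : ℝ => NormedSpace.exp (t • A) - Λ) (Set.Ici 0) ∧
      A * (∫ t in Set.Ici (0:ℝ), (NormedSpace.exp (t • A) - Λ)) = Λ - 1 :=
  ⟨integrableOn_exp_smul_sub_of_tendsto hΛ, mul_integral_exp_smul_sub_of_tendsto hΛ⟩
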